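/- For integers i > j ≥ 2, and any monomial w of length n ≥ i in the free associative algebra over ℚ, one has h^l_i(h^l_j(w)) = h^l_i(w), where h^l_i is extended linearly from monomials to all of the algebra. -/

import Mathlib

noncomputable section

abbrev FA (k : Type*) [Field k] (p : ℕ) := MonoidAlgebra k (FreeMonoid (Fin p))

def mon (k : Type*) [Field k] {p : ℕ} (l : List (Fin p)) : FA k p :=
  MonoidAlgebra.of k (FreeMonoid (Fin p)) (FreeMonoid.ofList l)

def etaRev (k : Type*) [Field k] {p : ℕ} : List (Fin p) → FA k p
  | [] => 0
  | [a] => mon k [a]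
  | a :: b :: l => mon k [a] * etaRev k (b :: l) - etaRev k (b :: l) * mon k [a]

def etaList (k : Type*) [Field k] {p : ℕ} (l : List (Fin p)) : FA k p :=
  etaRev k l.reverse

def etaLin (k : Type*) [Field k] (p : ℕ) : FA k p →ₗ[k] FA k p :=
  Finsupp.lift (FA k p) k (FreeMonoid (Fin p)) (fun w => etaList k (FreeMonoid.toList w)) ∘ₗ
    (MonoidAlgebra.coeffLinearEquiv k : FA k p ≃ₗ[k] (FreeMonoid (Fin p) →₀ k)).toLinearMap

/-- The fold move `h^l_n` on a monomial (word). -/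
def hl (k : Type*) [Field k] {p : ℕ} (n : ℕ) (l : List (Fin p)) : FA k p :=
  if 2 ≤ n ∧ n ≤ l.length then
    ((-1 : k) ^ (n - 1)) •
      (mon k ((l.drop (n - 1)).take 1) * etaList k (l.take (n - 1)) * mon k (l.drop n))
  else mon k l

def hlLin (k : Type*) [Field k] (p n : ℕ) : FA k p →ₗ[k] FA k p :=
  Finsupp.lift (FA k p) k (FreeMonoid (Fin p)) (fun w => hl k n (FreeMonoid.toList w)) ∘ₗ
    (MonoidAlgebra.coeffLinearEquiv k : FA k p ≃ₗ[k] (FreeMonoid (Fin p) →₀ k)).toLinearMap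

/-- The span of the `H^l` relations `h^l_n(w) - w`. -/
def Rspan (k : Type*) [Field k] (p : ℕ) : Submodule k (FA k p) :=
  Submodule.span k
    {x | ∃ (l : List (Fin p)) (n : ℕ), 2 ≤ n ∧ n ≤ l.length ∧ x = hl k n l - mon k l}

/-!
Cut `w = u c s d t` with `|u| = j - 1` and `|u c s| = i - 1`. Then `h_j(w) = ± c η(u) s d t`,
and since `c η(u)` is homogeneous of degree `j < i`, `h_i` folds each of its monomials at the
same letter `d`, giving `± d η(c η(u) s) t`, while `h_i(w) = ± d η(u c s) t`. So everything
reduces to `η(c η(u) s) = (-1)^|u| η(u c s)`. This follows from `η(x a) = [a, η x]` for `x` of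
positive degree, which by induction and the Jacobi identity gives
`η(x η(r)) = (-1)^(|r|+1) [η r, η x]`.
-/

lemma exists_eq_append_cons_of_lt_length {α : Type*} {l : List α} {n : ℕ} (h : n < l.length) :
    ∃ u c t, l = u ++ c :: t ∧ u.length = n :=
  ⟨l.take n, l[n], l.drop (n + 1), by rw [← List.drop_eq_getElem_cons h, List.take_append_drop],
    by simp only [List.length_take]; omega⟩

attribute [local instance] LieRing.ofAssociativeRing

variable {k : Type*} [Field k] {p : ℕ}

lemma mon_mul_mon (l t : List (Fin p)) : mon k l * mon k t = mon k (l ++ t) := by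
  simp only [mon, ← map_mul]
  rfl

lemma mon_nil : mon k ([] : List (Fin p)) = 1 := rfl

lemma lift_comp_coeff_mon {M : Type*} [AddCommGroup M] [Module k M]
    (f : FreeMonoid (Fin p) → M) (l : List (Fin p)) :
    (Finsupp.lift M k (FreeMonoid (Fin p)) f ∘ₗ
      (MonoidAlgebra.coeffLinearEquiv k : FA k p ≃ₗ[k] (FreeMonoid (Fin p) →₀ k)).toLinearMap)
        (mon k l) = f (FreeMonoid.ofList l) := by
  simp [mon]

lemma etaLin_mon (l : List (Fin p)) : etaLin k p (mon k l) = etaList k l :=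
  lift_comp_coeff_mon _ l

lemma hlLin_mon (n : ℕ) (l : List (Fin p)) : hlLin k p n (mon k l) = hl k n l :=
  lift_comp_coeff_mon _ l

lemma etaRev_cons_cons (a b : Fin p) (l : List (Fin p)) :
    etaRev k (a :: b :: l) = ⁅mon k [a], etaRev k (b :: l)⁆ :=
  (Ring.lie_def _ _).symm

lemma etaList_append_singleton {l : List (Fin p)} (h : l ≠ []) (a : Fin p) :
    etaList k (l ++ [a]) = ⁅mon k [a], etaList k l⁆ := by
  obtain ⟨c, l', hl⟩ := List.exists_cons_of_ne_nil (List.reverse_ne_nil_iff.2 h)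
  simp only [etaList, List.reverse_append, List.reverse_singleton, List.singleton_append, hl,
    etaRev_cons_cons]

lemma hl_append_cons {n : ℕ} (h2 : 2 ≤ n) {u : List (Fin p)} (hu : u.length + 1 = n)
    (c : Fin p) (t : List (Fin p)) :
    hl k n (u ++ c :: t) = (-1 : k) ^ (n - 1) • (mon k [c] * etaList k u * mon k t) := by
  subst hu
  rw [hl, if_pos ⟨h2, by simp⟩]
  simp

variable (k p) in
def homogSpan (m : ℕ) : Submodule k (FA k p) :=
  Submodule.span k (mon k '' {l | l.length = m})

lemma mon_mem_homogSpan (l : List (Fin p)) : mon k l ∈ homogSpan k p l.length :=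
  Submodule.subset_span ⟨l, rfl, rfl⟩

lemma homogSpan_mul_le (m n : ℕ) :
    homogSpan k p m * homogSpan k p n ≤ homogSpan k p (m + n) := by
  rw [homogSpan, homogSpan, Submodule.span_mul_span]
  refine Submodule.span_mono ?_
  rintro _ ⟨_, ⟨l, rfl, rfl⟩, _, ⟨t, rfl, rfl⟩, rfl⟩
  exact ⟨l ++ t, List.length_append, (mon_mul_mon l t).symm⟩

lemma mul_mem_homogSpan {m n : ℕ} {x y : FA k p} (hx : x ∈ homogSpan k p m)
    (hy : y ∈ homogSpan k p n) : x * y ∈ homogSpan k p (m + n) :=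
  homogSpan_mul_le m n (Submodule.mul_mem_mul hx hy)

lemma lie_mon_mem_homogSpan {m : ℕ} {x : FA k p} (hx : x ∈ homogSpan k p m) (a : Fin p) :
    ⁅mon k [a], x⁆ ∈ homogSpan k p (m + 1) := by
  rw [Ring.lie_def]
  refine sub_mem ?_ (mul_mem_homogSpan hx (mon_mem_homogSpan [a]))
  rw [add_comm]
  exact mul_mem_homogSpan (mon_mem_homogSpan [a]) hx

lemma etaRev_mem_homogSpan : ∀ r : List (Fin p), etaRev k r ∈ homogSpan k p r.length
  | [] => zero_mem _
  | [a] => mon_mem_homogSpan [a]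
  | a :: b :: l => by
    rw [etaRev_cons_cons]
    exact lie_mon_mem_homogSpan (etaRev_mem_homogSpan (b :: l)) a

lemma etaList_mem_homogSpan (l : List (Fin p)) : etaList k l ∈ homogSpan k p l.length := by
  have h := etaRev_mem_homogSpan (k := k) l.reverse
  rwa [List.length_reverse] at h

lemma etaLin_mul_mon {m : ℕ} (hm : 0 < m) {x : FA k p} (hx : x ∈ homogSpan k p m) (a : Fin p) :
    etaLin k p (x * mon k [a]) = ⁅mon k [a], etaLin k p x⁆ := by
  induction hx using Submodule.span_induction with
  | mem _ h =>
    obtain ⟨l, hl, rfl⟩ := h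
    rw [mon_mul_mon, etaLin_mon, etaLin_mon,
      etaList_append_singleton (List.ne_nil_of_length_pos (hl ▸ hm))]
  | zero => rw [zero_mul, map_zero, lie_zero]
  | add _ _ _ _ hx hy => rw [add_mul, map_add, map_add, hx, hy, lie_add]
  | smul r _ _ hx => rw [smul_mul_assoc, map_smul, map_smul, hx, lie_smul]

lemma etaLin_mul_etaRev : ∀ (r : List (Fin p)), r ≠ [] → ∀ {m : ℕ}, 0 < m →
    ∀ {x : FA k p}, x ∈ homogSpan k p m →
      etaLin k p (x * etaRev k r) = (-1 : k) ^ (r.length + 1) • ⁅etaRev k r, etaLin k p x⁆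
  | [a], _, _, hm, _, hx => by
    rw [show etaRev k [a] = mon k [a] from rfl, etaLin_mul_mon hm hx]
    simp
  | a :: b :: l, _, m, hm, x, hx => by
    set E := etaRev k (b :: l)
    have ih {n : ℕ} (hn : 0 < n) {y : FA k p} (hy : y ∈ homogSpan k p n) :=
      etaLin_mul_etaRev (b :: l) (List.cons_ne_nil _ _) hn hy
    have hsplit : x * ⁅mon k [a], E⁆ = x * mon k [a] * E - x * E * mon k [a] := by
      rw [Ring.lie_def]
      noncomm_ring
    rw [etaRev_cons_cons, hsplit, map_sub,
      ih (Nat.add_pos_left hm 1) (mul_mem_homogSpan hx (mon_mem_homogSpan [a])),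
      etaLin_mul_mon hm hx,
      etaLin_mul_mon (Nat.add_pos_left hm _) (mul_mem_homogSpan hx (etaRev_mem_homogSpan _)),
      ih hm hx, lie_smul, ← smul_sub, ← lie_lie, ← lie_skew E (mon k [a]), neg_lie, smul_neg,
      ← neg_smul]
    congr 1
    rw [List.length_cons (a := a), pow_succ _ (_ + 1), mul_neg_one]

lemma etaLin_mon_mul_etaList_mul_mon {u : List (Fin p)} (hu : u ≠ []) (b : Fin p)
    (s : List (Fin p)) :
    (-1 : k) ^ u.length • etaLin k p (mon k [b] * etaList k u * mon k s) =
      etaList k (u ++ b :: s) := by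
  induction s using List.reverseRecOn with
  | nil =>
    have hb : etaLin k p (mon k [b]) = mon k [b] := etaLin_mon [b]
    have h := etaLin_mul_etaRev (k := k) u.reverse (List.reverse_ne_nil_iff.2 hu)
      Nat.one_pos (mon_mem_homogSpan [b])
    rw [hb, List.length_reverse] at h
    rw [mon_nil, mul_one, etaList_append_singleton hu, etaList, h, smul_smul, ← pow_add,
      show u.length + (u.length + 1) = 2 * u.length + 1 by ring, pow_succ, pow_mul, neg_one_sq,
      one_pow, one_mul, neg_one_smul, lie_skew]
  | append_singleton s a ih =>
    have hX : mon k [b] * etaList k u * mon k s ∈ homogSpan k p (1 + u.length + s.length) :=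
      mul_mem_homogSpan (mul_mem_homogSpan (mon_mem_homogSpan [b]) (etaList_mem_homogSpan u))
        (mon_mem_homogSpan s)
    rw [← mon_mul_mon, ← mul_assoc, etaLin_mul_mon (by omega) hX, ← lie_smul, ih,
      ← List.cons_append, ← List.append_assoc, etaList_append_singleton (by simp)]

lemma hlLin_mul_mon_append_cons {n m : ℕ} (h2 : 2 ≤ n) {x : FA k p} (hx : x ∈ homogSpan k p m)
    {s : List (Fin p)} (hs : m + s.length + 1 = n) (d : Fin p) (t : List (Fin p)) :
    hlLin k p n (x * mon k (s ++ d :: t)) =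
      (-1 : k) ^ (n - 1) • (mon k [d] * etaLin k p (x * mon k s) * mon k t) := by
  induction hx using Submodule.span_induction with
  | mem _ h =>
    obtain ⟨l, rfl, rfl⟩ := h
    rw [mon_mul_mon, mon_mul_mon, hlLin_mon, etaLin_mon, ← List.append_assoc,
      hl_append_cons h2 (by rw [List.length_append]; omega)]
  | zero => simp
  | add _ _ _ _ hx hy =>
    rw [add_mul, map_add, hx, hy, add_mul, map_add, mul_add, add_mul, smul_add]
  | smul r _ _ hx =>
    rw [smul_mul_assoc, map_smul, hx, smul_mul_assoc, map_smul, mul_smul_comm, smul_mul_assoc,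
      smul_comm]

/-- For i > j ≥ 2 and a monomial w of length ≥ i over ℚ, h^l_i(h^l_j(w)) = h^l_i(w). -/
theorem hl_hl {p : ℕ} (i j : ℕ) (hj : 2 ≤ j) (hij : j < i)
    (w : List (Fin p)) (hw : i ≤ w.length) :
    hlLin ℚ p i (hl ℚ j w) = hl ℚ i w := by
  obtain ⟨v, d, t, rfl, hv⟩ := exists_eq_append_cons_of_lt_length (show i - 1 < w.length by omega)
  obtain ⟨u, c, s, rfl, hu⟩ := exists_eq_append_cons_of_lt_length (show j - 1 < v.length by omega)
  have hcu : mon ℚ [c] * etaList ℚ u ∈ homogSpan ℚ p (1 + u.length) :=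
    mul_mem_homogSpan (mon_mem_homogSpan [c]) (etaList_mem_homogSpan u)
  have hcs : 1 + u.length + s.length + 1 = i := by
    simp only [List.length_append, List.length_cons] at hv
    omega
  rw [hl_append_cons (n := i) (by omega) (by omega), List.append_assoc, List.cons_append,
    hl_append_cons hj (by omega), map_smul, hlLin_mul_mon_append_cons (by omega) hcu hcs,
    ← etaLin_mon_mul_etaList_mul_mon (List.ne_nil_of_length_pos (by omega)) c s, hu,
    mul_smul_comm, smul_mul_assoc, smul_comm]
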